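/- arXiv:1903.03334 — 6 statements merged into one kernel-verified Lean document; each statement's English description precedes it below -/
import Mathlib

section
/- The homomorphism φ : F_a → F_b is injective. -/
/-- The generating alphabet `X ⊔ Y ⊔ {y} ⊔ {indexed family over ℕ}`.  In the domain
`F_a` the `ℕ`-indexed generators are the `t_n`; in the codomain `F_b` they are the
`z_n`. -/
abbrev ConstrGen (X Y : Type) : Type := X ⊕ Y ⊕ Unit ⊕ ℕ

/-- The distinguished generator `y`. -/
def yGen (X Y : Type) : ConstrGen X Y := Sum.inr (Sum.inr (Sum.inl ()))

/-- The `n`-th `ℕ`-indexed generator (`t_n` in `F_a`, `z_n` in `F_b`). -/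
def nGen (X Y : Type) (n : ℕ) : ConstrGen X Y := Sum.inr (Sum.inr (Sum.inr n))

/-- The homomorphism `φ : F_a → F_b` which fixes each generator in `X ⊔ Y ⊔ {y}`
and sends `t_n ↦ y·z_{n+1}⁻¹·z_n·z_{n+1}`. -/
def constrPhi (X Y : Type) : FreeGroup (ConstrGen X Y) →* FreeGroup (ConstrGen X Y) :=
  FreeGroup.lift fun g => match g with
    | Sum.inl x => FreeGroup.of (Sum.inl x)
    | Sum.inr (Sum.inl w) => FreeGroup.of (Sum.inr (Sum.inl w))
    | Sum.inr (Sum.inr (Sum.inl _)) => FreeGroup.of (yGen X Y)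
    | Sum.inr (Sum.inr (Sum.inr n)) =>
        FreeGroup.of (yGen X Y) * (FreeGroup.of (nGen X Y (n + 1)))⁻¹ *
          FreeGroup.of (nGen X Y n) * FreeGroup.of (nGen X Y (n + 1))

/-!
For each `N`, the endomorphism `ψ_N` fixing `X ⊔ Y ⊔ {y}` and sending `z_n` to `u_n`, where
`u_{N+1} = 1` and `u_n = u_{n+1} y⁻¹ z_n u_{n+1}⁻¹`, satisfies
`ψ_N (φ t_n) = y u_{n+1}⁻¹ u_n u_{n+1} = t_n` for `n ≤ N`. Every element of `F_a` involves only
finitely many `t_n`, so it is recovered from its image by `ψ_N` for all large `N`.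
-/

open Filter
open FreeGroup (of lift)

theorem FreeGroup.eventually_eq_of_eventually_eq_of {α ι G : Type*} [Group G] {l : Filter ι}
    {f g : ι → FreeGroup α →* G} (h : ∀ a, ∀ᶠ i in l, f i (of a) = g i (of a))
    (x : FreeGroup α) : ∀ᶠ i in l, f i x = g i x := by
  induction x with
  | C1 => exact .of_forall fun i => by rw [_root_.map_one, _root_.map_one]
  | of a => exact h a
  | inv_of a _ => exact (h a).mono fun i hi => by rw [_root_.map_inv, _root_.map_inv, hi]
  | mul x y hx hy =>
    exact (hx.and hy).mono fun i hi => by rw [_root_.map_mul, _root_.map_mul, hi.1, hi.2]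

theorem Function.injective_of_eventually_leftInverse {α β ι : Type*} {l : Filter ι} [l.NeBot]
    {φ : α → β} {ψ : ι → β → α} (h : ∀ x, ∀ᶠ i in l, ψ i (φ x) = x) : Function.Injective φ := by
  intro x y hxy
  obtain ⟨i, hx, hy⟩ := ((h x).and (h y)).exists
  rw [← hx, ← hy, hxy]

namespace ConstrPhi

variable {X Y : Type}

/-- `tower X Y (N + 1 - n) n` is `u_n`; the first argument is the remaining recursion depth. -/
def tower (X Y : Type) : ℕ → ℕ → FreeGroup (ConstrGen X Y)
  | 0, _ => 1
  | d + 1, n =>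
      tower X Y d (n + 1) * (of (yGen X Y))⁻¹ * of (nGen X Y n) * (tower X Y d (n + 1))⁻¹

def retraction (X Y : Type) (N : ℕ) : FreeGroup (ConstrGen X Y) →* FreeGroup (ConstrGen X Y) :=
  lift fun
    | Sum.inr (Sum.inr (Sum.inr n)) => tower X Y (N + 1 - n) n
    | a => of a

theorem retraction_constrPhi_of_nGen {N n : ℕ} (h : n ≤ N) :
    retraction X Y N (constrPhi X Y (of (nGen X Y n))) = of (nGen X Y n) := by
  have hd : N + 1 - n = N - n + 1 := by omega
  simp only [retraction, constrPhi, yGen, nGen, FreeGroup.lift_apply_of, map_mul, map_inv,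
    Nat.reduceSubDiff]
  rw [hd, tower, yGen, nGen]
  group

theorem eventually_retraction_constrPhi_of (a : ConstrGen X Y) :
    ∀ᶠ N in atTop, retraction X Y N (constrPhi X Y (of a)) = of a := by
  rcases a with x | w | ⟨⟩ | n
  iterate 3 exact .of_forall fun N => by simp [constrPhi, retraction, yGen]
  · exact (eventually_ge_atTop n).mono fun N => retraction_constrPhi_of_nGen

end ConstrPhi

/-- The homomorphism `φ : F_a → F_b` is injective. -/
theorem constrPhi_injective (X Y : Type) : Function.Injective (constrPhi X Y) :=
  Function.injective_of_eventually_leftInverse (l := atTop)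
    (FreeGroup.eventually_eq_of_eventually_eq_of
      (f := fun N => (ConstrPhi.retraction X Y N).comp (constrPhi X Y))
      (g := fun _ => MonoidHom.id _) ConstrPhi.eventually_retraction_constrPhi_of)
end

section
/- For every n ∈ ℕ, the generator z_n does not belong to the image φ(F_a). -/
/-!
Map `F_b` to the permutations of `ℕ` by killing every generator except the `z_k`, and
sending `z_k` to the transposition `(0, k+2)`. The image of `φ(t_k)` is then the conjugate
of `(0, k+2)` by `(0, k+3)`, which is `(k+2, k+3)` and fixes `0`; so all of `φ(F_a)` fixes `0`,
whereas `z_n` moves `0` to `n + 2`.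
-/

namespace Equiv

theorem swap_conj_swap_apply_self {α : Type*} [DecidableEq α] {x a b : α}
    (hab : a ≠ b) (hxb : x ≠ b) : ((swap x b)⁻¹ * swap x a * swap x b) x = x := by
  rw [Perm.mul_apply, Perm.mul_apply, swap_inv, swap_apply_left,
    swap_apply_of_ne_of_ne hxb.symm hab.symm, swap_apply_right]

end Equiv

open Equiv

namespace ConstrGen

variable (X Y : Type)

def zSwapRep : FreeGroup (ConstrGen X Y) →* Perm ℕ :=
  FreeGroup.lift <| Sum.elim 1 <| Sum.elim 1 <| Sum.elim 1 fun k => swap 0 (k + 2)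

theorem zSwapRep_of_nGen (n : ℕ) :
    zSwapRep X Y (FreeGroup.of (nGen X Y n)) = swap 0 (n + 2) := by
  simp [zSwapRep, nGen]

theorem zSwapRep_of_yGen : zSwapRep X Y (FreeGroup.of (yGen X Y)) = 1 := by
  simp [zSwapRep, yGen]

theorem range_constrPhi_le_comap_stabilizer :
    (constrPhi X Y).range ≤ (MulAction.stabilizer (Perm ℕ) 0).comap (zSwapRep X Y) := by
  refine FreeGroup.range_lift_le ?_
  rintro _ ⟨g, rfl⟩
  rw [SetLike.mem_coe, Subgroup.mem_comap, MulAction.mem_stabilizer_iff, Perm.smul_def]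
  rcases g with x | w | u | k
  · simp [zSwapRep]
  · simp [zSwapRep]
  · simp [zSwapRep_of_yGen]
  · simp only [map_mul, map_inv, zSwapRep_of_nGen, zSwapRep_of_yGen, one_mul]
    exact swap_conj_swap_apply_self (by omega) (by omega)

end ConstrGen

open ConstrGen in
/-- For every `n ∈ ℕ`, the generator `z_n` does not belong to the image `φ(F_a)`. -/
theorem zGen_not_mem_range_constrPhi (X Y : Type) (n : ℕ) :
    FreeGroup.of (nGen X Y n) ∉ (constrPhi X Y).range := fun h => by
  have h0 := range_constrPhi_le_comap_stabilizer X Y h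
  rw [Subgroup.mem_comap, MulAction.mem_stabilizer_iff, Perm.smul_def, zSwapRep_of_nGen,
    swap_apply_left] at h0
  omega
end

section
/- The subgroup φ(F_a) is not a free factor of F_b. -/
/-- A subgroup `H` of a group `G` is a *free factor* of `G` if there exists a subgroup
`K ≤ G` such that the natural map `H ∗ K → G` induced by the inclusions is an
isomorphism. -/
def IsFreeFactor {G : Type*} [Group G] (H : Subgroup G) : Prop :=
  ∃ K : Subgroup G, Function.Bijective (Monoid.Coprod.lift H.subtype K.subtype)

open Subgroup

theorem IsFreeFactor.eq_top_of_normalClosure_eq_top {G : Type*} [Group G] {H : Subgroup G}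
    (hH : IsFreeFactor H) (hN : normalClosure (H : Set G) = ⊤) : H = ⊤ := by
  obtain ⟨K, hbij⟩ := hH
  let e := MulEquiv.ofBijective _ hbij
  let r : G →* K := Monoid.Coprod.snd.comp e.symm.toMonoidHom
  have hH_ker : H ≤ r.ker := fun h hh => by
    change Monoid.Coprod.snd (e.symm (e (Monoid.Coprod.inl ⟨h, hh⟩))) = 1
    simp
  have hr_K : ∀ k : K, r k = k := fun k => by
    change Monoid.Coprod.snd (e.symm (e (Monoid.Coprod.inr k))) = k
    simp
  have hK : K = ⊥ := by
    have hr : r.ker = ⊤ := top_le_iff.mp (hN ▸ normalClosure_le_normal hH_ker)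
    refine eq_bot_iff.mpr fun k hk => ?_
    simpa [hr_K ⟨k, hk⟩] using (hr ▸ mem_top k : (k : G) ∈ r.ker)
  simpa [Monoid.Coprod.range_lift, hK] using MonoidHom.range_eq_top_of_surjective _ hbij.2

def zSwapRep (X Y : Type) : FreeGroup (ConstrGen X Y) →* Equiv.Perm ℕ :=
  FreeGroup.lift fun
    | Sum.inr (Sum.inr (Sum.inr n)) => Equiv.swap 0 (n + 1)
    | _ => 1

theorem range_constrPhi_le_comap_stabilizer (X Y : Type) :
    (constrPhi X Y).range ≤ (MulAction.stabilizer (Equiv.Perm ℕ) 0).comap (zSwapRep X Y) := by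
  refine FreeGroup.range_lift_le ?_
  rintro _ ⟨(x | w | _ | n), rfl⟩ <;>
    simp [zSwapRep, yGen, nGen, Equiv.swap_apply_of_ne_of_ne]

theorem of_nGen_zero_notMem_range_constrPhi (X Y : Type) :
    FreeGroup.of (nGen X Y 0) ∉ (constrPhi X Y).range := fun h => by
  simpa [zSwapRep, nGen] using range_constrPhi_le_comap_stabilizer X Y h

theorem of_nGen_eq_conj (X Y : Type) (n : ℕ) :
    FreeGroup.of (nGen X Y n) = FreeGroup.of (nGen X Y (n + 1)) *
      ((constrPhi X Y (FreeGroup.of (yGen X Y)))⁻¹ * constrPhi X Y (FreeGroup.of (nGen X Y n))) *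
        (FreeGroup.of (nGen X Y (n + 1)))⁻¹ := by
  simp only [constrPhi, yGen, nGen, FreeGroup.lift_apply_of]
  group

theorem normalClosure_range_constrPhi (X Y : Type) :
    normalClosure ((constrPhi X Y).range : Set (FreeGroup (ConstrGen X Y))) = ⊤ := by
  have hφ : ∀ w, constrPhi X Y w ∈ normalClosure ((constrPhi X Y).range : Set _) :=
    fun w => subset_normalClosure ⟨w, rfl⟩
  rw [eq_top_iff, ← FreeGroup.closure_range_of, closure_le]
  rintro _ ⟨(x | w | ⟨⟩ | n), rfl⟩
  · exact hφ (FreeGroup.of (Sum.inl x))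
  · exact hφ (FreeGroup.of (Sum.inr (Sum.inl w)))
  · exact hφ (FreeGroup.of (yGen X Y))
  · change FreeGroup.of (nGen X Y n) ∈ _
    rw [of_nGen_eq_conj]
    exact normalClosure_normal.conj_mem _ (mul_mem (inv_mem (hφ _)) (hφ _)) _

/-- The subgroup `φ(F_a)` is not a free factor of `F_b`. -/
theorem range_constrPhi_not_isFreeFactor (X Y : Type) :
    ¬ IsFreeFactor (constrPhi X Y).range := fun h =>
  of_nGen_zero_notMem_range_constrPhi X Y <|
    (h.eq_top_of_normalClosure_eq_top (normalClosure_range_constrPhi X Y)) ▸ mem_top _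
end

section
/- The equality (φ(F_a))' = φ(F_a) ∩ F_b' holds, where G' denotes the commutator (derived) subgroup of a group G; that is, the commutator subgroup of the image φ(F_a) equals the intersection of φ(F_a) with the commutator subgroup of F_b. -/
/-!
Since `⁅φ(F_a), φ(F_a)⁆ = φ(F_a')` and `φ(F_a) ∩ F_b' = φ(φ⁻¹(F_b'))`, it suffices that
`φ⁻¹(F_b') ≤ F_a'`, i.e. that `φ` is injective on abelianizations. On `ℤ^(X ⊔ Y ⊔ {y} ⊔ ℕ)`
the abelianized `φ` is `f ↦ f + (∑ₙ f(tₙ)) • e_y`: the identity plus a square-zero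
endomorphism, hence injective.
-/

theorem MonoidHom.commutator_range_eq_range_inf {G H : Type*} [Group G] [Group H] {f : G →* H}
    (hf : (commutator H).comap f ≤ commutator G) :
    ⁅f.range, f.range⁆ = f.range ⊓ commutator H := by
  have h : commutator G ≤ (commutator H).comap f :=
    (Abelianization.commutator_subset_ker (Abelianization.of.comp f)).trans_eq
      (by ext; simp [← Abelianization.ker_of])
  rw [← Subgroup.map_comap_eq, le_antisymm hf h, MonoidHom.range_eq_map,
    ← Subgroup.map_commutator, commutator_def]

theorem AddMonoidHom.injective_id_add_of_comp_self_eq_zero {M : Type*} [AddCommGroup M]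
    {u : M →+ M} (hu : u.comp u = 0) : Function.Injective (AddMonoidHom.id M + u) := by
  intro x x' h
  have huu (z : M) : u (u z) = 0 := DFunLike.congr_fun hu z
  have hux : u x = u x' := by simpa [huu] using congrArg u h
  simpa [hux] using h

namespace FreeGroup

variable {α β : Type*}

noncomputable def toFinsuppHom : FreeGroup α →* Multiplicative (α →₀ ℤ) :=
  FreeGroup.lift fun a => .ofAdd (Finsupp.single a 1)

@[simp]
theorem toFinsuppHom_of (a : α) : toFinsuppHom (of a) = .ofAdd (Finsupp.single a 1) :=
  lift_apply_of

theorem ker_toFinsuppHom : (toFinsuppHom (α := α)).ker = commutator (FreeGroup α) := by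
  refine le_antisymm (fun a ha => ?_) (Abelianization.commutator_subset_ker _)
  let s : Multiplicative (α →₀ ℤ) →* Abelianization (FreeGroup α) :=
    AddMonoidHom.toMultiplicativeLeft <| Finsupp.liftAddHom fun a =>
      zmultiplesHom _ (.ofMul (Abelianization.of (of a)))
  have hs : s.comp toFinsuppHom = Abelianization.of := by
    ext a
    simp [s, AddMonoidHom.toMultiplicativeLeft]
  rw [← Abelianization.ker_of, MonoidHom.mem_ker, ← hs, MonoidHom.comp_apply,
    MonoidHom.mem_ker.mp ha, s.map_one]

theorem comap_commutator_le_of_toFinsuppHom_comp {f : FreeGroup α →* FreeGroup β}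
    {g : (α →₀ ℤ) →+ (β →₀ ℤ)} (hg : Function.Injective g)
    (hfg : toFinsuppHom.comp f = g.toMultiplicative.comp toFinsuppHom) :
    (commutator (FreeGroup β)).comap f ≤ commutator (FreeGroup α) := by
  intro a ha
  rw [Subgroup.mem_comap, ← ker_toFinsuppHom, MonoidHom.mem_ker, ← MonoidHom.comp_apply,
    hfg] at ha
  rw [← ker_toFinsuppHom, MonoidHom.mem_ker]
  exact Multiplicative.toAdd.injective (hg (by simpa using ha))

end FreeGroup

section constrPhi

variable (X Y : Type)

noncomputable def zCoeffSum : (ConstrGen X Y →₀ ℤ) →+ ℤ :=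
  Finsupp.liftAddHom fun
    | Sum.inr (Sum.inr (Sum.inr _)) => AddMonoidHom.id ℤ
    | _ => 0

noncomputable def constrPhiAb : (ConstrGen X Y →₀ ℤ) →+ (ConstrGen X Y →₀ ℤ) :=
  AddMonoidHom.id _ + (Finsupp.singleAddHom (yGen X Y)).comp (zCoeffSum X Y)

theorem constrPhiAb_injective : Function.Injective (constrPhiAb X Y) :=
  AddMonoidHom.injective_id_add_of_comp_self_eq_zero (by ext; simp [zCoeffSum, yGen])

theorem toFinsuppHom_comp_constrPhi :
    FreeGroup.toFinsuppHom.comp (constrPhi X Y) =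
      (constrPhiAb X Y).toMultiplicative.comp FreeGroup.toFinsuppHom := by
  ext (x | w | u | n) <;> simp [constrPhi, constrPhiAb, zCoeffSum, yGen, nGen]
  abel

theorem comap_commutator_le_constrPhi :
    (commutator (FreeGroup (ConstrGen X Y))).comap (constrPhi X Y) ≤
      commutator (FreeGroup (ConstrGen X Y)) :=
  FreeGroup.comap_commutator_le_of_toFinsuppHom_comp (constrPhiAb_injective X Y)
    (toFinsuppHom_comp_constrPhi X Y)

end constrPhi

/-- The equality `(φ(F_a))' = φ(F_a) ∩ F_b'` holds: the commutator subgroup of the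
image `φ(F_a)` (viewed as a subgroup of `F_b`) equals the intersection of `φ(F_a)`
with the commutator subgroup of `F_b`. -/
theorem commutator_range_constrPhi (X Y : Type) :
    Subgroup.map (constrPhi X Y).range.subtype (commutator ↥(constrPhi X Y).range) =
      (constrPhi X Y).range ⊓ commutator (FreeGroup (ConstrGen X Y)) := by
  rw [Subgroup.map_subtype_commutator]
  exact (constrPhi X Y).commutator_range_eq_range_inf (comap_commutator_le_constrPhi X Y)
end

section
/- The induced homomorphism φ̄ : F_a/F_a' → F_b/F_b' between the abelianizations is an isomorphism. -/
/-! In the abelianization the conjugation by `z_{n+1}` disappears, so `φ̄` is the change of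
basis `t_n ↦ y + z_n` fixing all other generators; it is inverted by `z_n ↦ t_n - y`. -/

def constrPsi (X Y : Type) : FreeGroup (ConstrGen X Y) →* FreeGroup (ConstrGen X Y) :=
  FreeGroup.lift fun g => match g with
    | Sum.inl x => FreeGroup.of (Sum.inl x)
    | Sum.inr (Sum.inl w) => FreeGroup.of (Sum.inr (Sum.inl w))
    | Sum.inr (Sum.inr (Sum.inl _)) => FreeGroup.of (yGen X Y)
    | Sum.inr (Sum.inr (Sum.inr n)) => (FreeGroup.of (yGen X Y))⁻¹ * FreeGroup.of (nGen X Y n)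

theorem abelianization_map_constrPhi_comp_constrPsi (X Y : Type) :
    (Abelianization.map (constrPhi X Y)).comp (Abelianization.map (constrPsi X Y)) =
      MonoidHom.id _ := by
  refine Abelianization.hom_ext _ _ (FreeGroup.ext_hom _ _ fun g => ?_)
  rcases g with x | w | u | n <;> simp [constrPhi, constrPsi, yGen, nGen, mul_assoc, mul_comm]

theorem abelianization_map_constrPsi_comp_constrPhi (X Y : Type) :
    (Abelianization.map (constrPsi X Y)).comp (Abelianization.map (constrPhi X Y)) =
      MonoidHom.id _ := by
  refine Abelianization.hom_ext _ _ (FreeGroup.ext_hom _ _ fun g => ?_)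
  rcases g with x | w | u | n <;> simp [constrPhi, constrPsi, yGen, nGen, mul_assoc, mul_comm]

/-- The induced homomorphism `φ̄ : F_a/F_a' → F_b/F_b'` between the abelianizations
is an isomorphism. -/
theorem abelianization_map_constrPhi_bijective (X Y : Type) :
    Function.Bijective (Abelianization.map (constrPhi X Y)) :=
  (MonoidHom.toMulEquiv _ _ (abelianization_map_constrPsi_comp_constrPhi X Y)
    (abelianization_map_constrPhi_comp_constrPsi X Y)).bijective
end

section
/- If κ is an uncountable regular cardinal, then every stationary subset of κ can be decomposed as the disjoint union of κ many stationary subsets of κ. -/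
/-!
It suffices to find `W ⊆ E` and a function `f`, regressive on `W`, such that for each `β < κ`
there are stationarily many `α ∈ W` with `β ≤ f α`: by Fodor's lemma `f` is then constant on a
stationary set at unboundedly many, hence `κ` many, values, and these fibres, one of them enlarged
by the rest of `E`, split `E`.

If `α.cof.ord < α` for stationarily many `α ∈ E`, Fodor's lemma fixes `θ = α.cof.ord` on a
stationary set `W`; pick cofinal maps `a α : θ → α`. A stationary set is not covered by fewer than
`κ` nonstationary sets, so some coordinate `f α = a α ξ` works. Otherwise the set `B` of regular
uncountable `α ∈ E` is stationary, and so is the set `W` of those `α ∈ B` admitting a club `c α`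
in `α` disjoint from `B`: the least point of `B` that is a limit point of a club `C` lies in `C`,
and the limit points of `C` below it form such a club. Let `f α` be an element of `c α` above a
fixed `ξ`. If no `ξ` worked, a diagonal intersection of the witnessing clubs would have a limit
point `γ ∈ B` below some `α ∈ W` with `c α` cofinal in `γ`, so that `γ ∈ c α ∩ B`.
-/

/-- A set `C` of ordinals is *club in* `α` if it is a subset of `α` (i.e. of the
ordinals below `α`), unbounded in `α`, and closed in the order topology on `α`. -/
def IsClubIn (C : Set Ordinal) (α : Ordinal) : Prop :=
  C ⊆ Set.Iio α ∧ (∀ β < α, ∃ γ ∈ C, β ≤ γ) ∧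
    ∀ β < α, (C ∩ Set.Iio β).Nonempty → sSup (C ∩ Set.Iio β) = β → β ∈ C

/-- A set `E` of ordinals is *stationary in* `α` if it is a subset of `α` and meets
every club subset of `α`. -/
def IsStationaryIn (E : Set Ordinal) (α : Ordinal) : Prop :=
  E ⊆ Set.Iio α ∧ ∀ C : Set Ordinal, IsClubIn C α → (E ∩ C).Nonempty

universe u v

open Cardinal Ordinal Order Set Filter Topology

theorem exists_iUnion_eq_of_pairwise_disjoint {α ι : Type*} [Nonempty ι] {E : Set α}
    {T : ι → Set α} (hT : Pairwise (Function.onFun Disjoint T)) (hTE : ∀ i, T i ⊆ E) :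
    ∃ S : ι → Set α, (∀ i, T i ⊆ S i) ∧ Pairwise (Function.onFun Disjoint S) ∧ ⋃ i, S i = E := by
  classical
  obtain ⟨i₀⟩ := ‹Nonempty ι›
  refine ⟨fun i => T i ∪ {x ∈ E \ ⋃ j, T j | i = i₀}, fun i => subset_union_left,
    fun i j hij => ?_, ?_⟩
  · refine disjoint_left.2 fun x hxi hxj => ?_
    rcases hxi with hxi | ⟨⟨-, hx⟩, rfl⟩ <;> rcases hxj with hxj | ⟨⟨-, hx'⟩, rfl⟩
    exacts [disjoint_left.1 (hT hij) hxi hxj, hx' (mem_iUnion_of_mem i hxi),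
      hx (mem_iUnion_of_mem j hxj), hij rfl]
  · refine (iUnion_subset fun i => union_subset (hTE i) fun x hx => hx.1.1).antisymm
      fun x hx => ?_
    by_cases h : x ∈ ⋃ j, T j
    · obtain ⟨j, hj⟩ := mem_iUnion.1 h
      exact mem_iUnion.2 ⟨j, .inl hj⟩
    · exact mem_iUnion.2 ⟨i₀, .inr ⟨⟨hx, h⟩, rfl⟩⟩

theorem accPt_principal_iff_sSup_inter_Iio_eq {C : Set Ordinal} {β : Ordinal} :
    AccPt β (𝓟 C) ↔ (C ∩ Iio β).Nonempty ∧ sSup (C ∩ Iio β) = β := by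
  rw [SuccOrder.accPt_principal]
  constructor
  · rintro ⟨hβ, hC⟩
    obtain ⟨y, hyC, hy⟩ := hC 0 (pos_iff_ne_zero.2 fun h => hβ (h ▸ isMin_bot))
    refine ⟨⟨y, hyC, hy.2⟩, csSup_eq_of_forall_le_of_forall_lt_exists_gt ⟨y, hyC, hy.2⟩
      (fun z hz => hz.2.le) fun w hw => ?_⟩
    obtain ⟨z, hzC, hwz, hzβ⟩ := hC w hw
    exact ⟨z, ⟨hzC, hzβ⟩, hwz⟩
  · rintro ⟨⟨y, hy⟩, hsup⟩
    refine ⟨not_isMin_of_lt hy.2, fun b hb => ?_⟩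
    obtain ⟨z, hz, hbz⟩ := exists_lt_of_lt_csSup ⟨y, hy⟩ (hsup ▸ hb)
    exact ⟨z, hz.1, hbz, hz.2⟩

theorem isClubIn_iff {C : Set Ordinal} {α : Ordinal} :
    IsClubIn C α ↔
      C ⊆ Iio α ∧ (∀ β < α, ∃ γ ∈ C, β ≤ γ) ∧ ∀ β < α, AccPt β (𝓟 C) → β ∈ C := by
  simp only [IsClubIn, accPt_principal_iff_sSup_inter_Iio_eq, and_imp]

theorem isClubIn_Ioo {α β : Ordinal} (hα : IsSuccLimit α) (hβ : β < α) :
    IsClubIn (Ioo β α) α := by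
  refine isClubIn_iff.2 ⟨Ioo_subset_Iio_self, fun x hx => ?_, fun γ hγα hγ => ?_⟩
  · exact ⟨max x (succ β), ⟨(lt_succ β).trans_le (le_max_right ..),
      max_lt hx (hα.succ_lt hβ)⟩, le_max_left ..⟩
  · obtain ⟨hmin, hγ⟩ := SuccOrder.accPt_principal.1 hγ
    obtain ⟨b, hb⟩ := not_isMin_iff.1 hmin
    obtain ⟨y, ⟨hβy, hyα⟩, -, hyγ⟩ := hγ b hb
    exact ⟨hβy.trans hyγ, hγα⟩

namespace IsClubIn

variable {C : Set Ordinal} {α β : Ordinal}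

theorem mem_of_accPt (hC : IsClubIn C α) (hβ : β < α) (h : AccPt β (𝓟 C)) : β ∈ C :=
  (isClubIn_iff.1 hC).2.2 β hβ h

theorem exists_gt (hC : IsClubIn C α) (hα : IsSuccLimit α) (hβ : β < α) :
    (C ∩ Ioo β α).Nonempty := by
  obtain ⟨γ, hγC, hγ⟩ := hC.2.1 (succ β) (hα.succ_lt hβ)
  exact ⟨γ, hγC, (lt_succ β).trans_le hγ, hC.1 hγC⟩

end IsClubIn

theorem not_isStationaryIn_iff {S : Set Ordinal} {α : Ordinal} (hS : S ⊆ Iio α) :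
    ¬ IsStationaryIn S α ↔ ∃ C, IsClubIn C α ∧ Disjoint S C := by
  simp [IsStationaryIn, hS, not_nonempty_iff_eq_empty, disjoint_iff_inter_eq_empty]

namespace IsStationaryIn

variable {S T : Set Ordinal} {α β : Ordinal}

theorem mono (hS : IsStationaryIn S α) (hST : S ⊆ T) (hT : T ⊆ Iio α) : IsStationaryIn T α :=
  ⟨hT, fun C hC => (hS.2 C hC).mono (inter_subset_inter_left _ hST)⟩

theorem exists_gt (hS : IsStationaryIn S α) (hα : IsSuccLimit α) (hβ : β < α) :
    ∃ γ ∈ S, β < γ :=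
  let ⟨γ, hγS, hβγ, _⟩ := hS.2 _ (isClubIn_Ioo hα hβ)
  ⟨γ, hγS, hβγ⟩

end IsStationaryIn

def IsUnboundedRegressiveOn (κ : Cardinal) (f : Ordinal → Ordinal) (W : Set Ordinal) : Prop :=
  (∀ α ∈ W, f α < α) ∧ ∀ β < κ.ord, IsStationaryIn {α ∈ W | β ≤ f α} κ.ord

section Regular

variable {κ : Cardinal.{u}} (hκ : κ.IsRegular) (hκ₀ : ℵ₀ < κ) {S : Set Ordinal.{u}}
include hκ hκ₀

theorem exists_closurePoint_gt {R : Ordinal.{u} → Ordinal.{u} → Prop}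
    (hR : ∀ x < κ.ord, ∃ z < κ.ord, R x z) {β₀ : Ordinal} (hβ₀ : β₀ < κ.ord) :
    ∃ β, β₀ < β ∧ β < κ.ord ∧ ∀ x < β, ∃ z < β, R x z := by
  choose! g hg using hR
  have hlim := isSuccLimit_ord hκ.aleph0_le
  -- `h x` bounds `g` on all of `[0, x]`, so the supremum of the `h`-iterates is closed under `g`.
  set h : Ordinal → Ordinal := fun x => succ (⨆ y : Iio (succ x), g y)
  have hh : ∀ x < κ.ord, h x < κ.ord := fun x hx => hlim.succ_lt <| by
    apply Ordinal.lift_iSup_lt_of_lt_cof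
    · rw [← lift_cof, hκ.cof_ord, Cardinal.mk_Iio_ordinal, Cardinal.lift_lift, Cardinal.lift_lt,
        ← lt_ord]
      exact hlim.succ_lt hx
    · exact fun y => (hg y ((lt_succ_iff.1 y.2).trans_lt hx)).1
  have hfix := nfp_lt_ord_of_isRegular hκ hκ₀.ne' hh (hlim.succ_lt hβ₀)
  refine ⟨nfp h (succ β₀), (lt_succ β₀).trans_le (le_nfp _ _), hfix, fun x hx => ?_⟩
  obtain ⟨n, hn⟩ := lt_nfp_iff.1 hx
  refine ⟨g x, ?_, (hg x (hx.trans hfix)).2⟩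
  calc g x ≤ ⨆ y : Iio (succ (h^[n] (succ β₀))), g y :=
        le_ciSup Ordinal.bddAbove_of_small (⟨x, lt_succ_of_le hn.le⟩ : Iio _)
    _ < h^[n + 1] (succ β₀) := by rw [Function.iterate_succ_apply']; exact lt_succ _
    _ ≤ nfp h (succ β₀) := iterate_le_nfp _ _ _

theorem IsClubIn.iInter {ι : Type v} (hι : Cardinal.lift.{u} #ι < Cardinal.lift.{v} κ)
    {C : ι → Set Ordinal.{u}} (hC : ∀ i, IsClubIn (C i) κ.ord) :
    IsClubIn (Iio κ.ord ∩ ⋂ i, C i) κ.ord := by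
  have hlim := isSuccLimit_ord hκ.aleph0_le
  refine isClubIn_iff.2 ⟨inter_subset_left, fun β₀ hβ₀ => ?_, fun β hβ hacc =>
    ⟨hβ, mem_iInter.2 fun i => (hC i).mem_of_accPt hβ
      (hacc.mono (principal_mono.2 (inter_subset_right.trans (iInter_subset _ i))))⟩⟩
  have hnext : ∀ x < κ.ord, ∃ z < κ.ord, ∀ i, (C i ∩ Ioc x z).Nonempty := by
    intro x hx
    choose n hn using fun i => (hC i).exists_gt hlim hx
    have hbdd : BddAbove (range n) := ⟨κ.ord, forall_mem_range.2 fun i => (hn i).2.2.le⟩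
    refine ⟨⨆ i, n i, Ordinal.lift_iSup_lt_of_lt_cof ?_ fun i => (hn i).2.2, fun i =>
      ⟨n i, (hn i).1, (hn i).2.1, le_ciSup hbdd i⟩⟩
    rwa [← lift_cof, hκ.cof_ord]
  obtain ⟨β, hβ₀β, hβ, hcl⟩ := exists_closurePoint_gt hκ hκ₀ hnext hβ₀
  refine ⟨β, ⟨hβ, mem_iInter.2 fun i => (hC i).mem_of_accPt hβ ?_⟩, hβ₀β.le⟩
  refine SuccOrder.accPt_principal.2 ⟨not_isMin_of_lt hβ₀β, fun x hx => ?_⟩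
  obtain ⟨z, hzβ, hz⟩ := hcl x hx
  obtain ⟨y, hyC, hxy, hyz⟩ := hz i
  exact ⟨y, hyC, hxy, hyz.trans_lt hzβ⟩

theorem IsClubIn.inter {A B : Set Ordinal.{u}} (hA : IsClubIn A κ.ord)
    (hB : IsClubIn B κ.ord) : IsClubIn (A ∩ B) κ.ord := by
  have hbool : Cardinal.lift.{u} #Bool < Cardinal.lift.{0} κ := by
    simpa using (natCast_lt_aleph0 (n := 2)).trans hκ₀
  have := IsClubIn.iInter hκ hκ₀ hbool (C := fun b => bif b then A else B) (by simp [hA, hB])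
  rwa [← inter_eq_iInter, inter_eq_right.2 (inter_subset_left.trans hA.1)] at this

theorem IsClubIn.diagInter {C : Ordinal.{u} → Set Ordinal.{u}}
    (hC : ∀ j < κ.ord, IsClubIn (C j) κ.ord) :
    IsClubIn {β | β < κ.ord ∧ ∀ j < β, β ∈ C j} κ.ord := by
  have hlim := isSuccLimit_ord hκ.aleph0_le
  refine isClubIn_iff.2 ⟨fun β hβ => hβ.1, fun β₀ hβ₀ => ?_,
    fun β hβ hacc => ⟨hβ, fun j hj => ?_⟩⟩
  · have hnext : ∀ x < κ.ord, ∃ z < κ.ord, x < z ∧ ∀ j ≤ x, z ∈ C j := by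
      intro x hx
      have hD := IsClubIn.iInter hκ hκ₀ (ι := Iio (succ x)) ?_ (C := fun j => C j)
        fun j => hC j ((lt_succ_iff.1 j.2).trans_lt hx)
      · obtain ⟨z, ⟨hzκ, hzC⟩, hxz, -⟩ := hD.exists_gt hlim hx
        exact ⟨z, hzκ, hxz, fun j hj => mem_iInter.1 hzC ⟨j, lt_succ_iff.2 hj⟩⟩
      · rw [Cardinal.mk_Iio_ordinal, Cardinal.lift_lift, Cardinal.lift_lt, ← lt_ord]
        exact hlim.succ_lt hx
    obtain ⟨β, hβ₀β, hβ, hcl⟩ := exists_closurePoint_gt hκ hκ₀ hnext hβ₀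
    refine ⟨β, ⟨hβ, fun j hj => (hC j (hj.trans hβ)).mem_of_accPt hβ ?_⟩, hβ₀β.le⟩
    refine SuccOrder.accPt_principal.2 ⟨not_isMin_of_lt hβ₀β, fun x hx => ?_⟩
    obtain ⟨z, hzβ, hxz, hzC⟩ := hcl (max x j) (max_lt hx hj)
    exact ⟨z, hzC j (le_max_right ..), (le_max_left ..).trans_lt hxz, hzβ⟩
  · refine (hC j (hj.trans hβ)).mem_of_accPt hβ (SuccOrder.accPt_principal.2
      ⟨hacc.not_isMin, fun x hx => ?_⟩)
    obtain ⟨y, hy, hxy, hyβ⟩ := (SuccOrder.accPt_principal.1 hacc).2 (max x j) (max_lt hx hj)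
    exact ⟨y, hy.2 j ((le_max_right ..).trans_lt hxy), (le_max_left ..).trans_lt hxy, hyβ⟩

theorem isClubIn_derivedSet_inter_Iio {C : Set Ordinal.{u}}
    (hC : ∀ x < κ.ord, (C ∩ Ioo x κ.ord).Nonempty) :
    IsClubIn (derivedSet C ∩ Iio κ.ord) κ.ord := by
  refine isClubIn_iff.2 ⟨inter_subset_right, fun β₀ hβ₀ => ?_, fun β hβ hacc => ⟨?_, hβ⟩⟩
  · have hnext : ∀ x < κ.ord, ∃ z < κ.ord, z ∈ C ∧ x < z := fun x hx =>
      let ⟨z, hzC, hxz, hzκ⟩ := hC x hx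
      ⟨z, hzκ, hzC, hxz⟩
    obtain ⟨β, hβ₀β, hβ, hcl⟩ := exists_closurePoint_gt hκ hκ₀ hnext hβ₀
    refine ⟨β, ⟨SuccOrder.accPt_principal.2 ⟨not_isMin_of_lt hβ₀β, fun x hx => ?_⟩, hβ⟩,
      hβ₀β.le⟩
    obtain ⟨z, hzβ, hzC, hxz⟩ := hcl x hx
    exact ⟨z, hzC, hxz, hzβ⟩
  · exact (isClosed_iff_derivedSet_subset _).1 (isClosed_derivedSet C)
      (hacc.mono (principal_mono.2 inter_subset_left))

theorem IsStationaryIn.inter_isClubIn (hS : IsStationaryIn S κ.ord) {C : Set Ordinal}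
    (hC : IsClubIn C κ.ord) : IsStationaryIn (S ∩ C) κ.ord := by
  refine ⟨inter_subset_left.trans hS.1, fun D hD => ?_⟩
  obtain ⟨x, hxS, hxC, hxD⟩ := hS.2 _ (hC.inter hκ hκ₀ hD)
  exact ⟨x, ⟨hxS, hxC⟩, hxD⟩

theorem IsStationaryIn.exists_inter_of_subset_iUnion {ι : Type v}
    (hι : Cardinal.lift.{u} #ι < Cardinal.lift.{v} κ) (hS : IsStationaryIn S κ.ord)
    {X : ι → Set Ordinal} (hSX : S ⊆ ⋃ i, X i) : ∃ i, IsStationaryIn (S ∩ X i) κ.ord := by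
  by_contra! h
  choose C hC hdisj using fun i =>
    (not_isStationaryIn_iff (inter_subset_left.trans hS.1)).1 (h i)
  obtain ⟨x, hxS, -, hxC⟩ := hS.2 _ (IsClubIn.iInter hκ hκ₀ hι hC)
  obtain ⟨i, hi⟩ := mem_iUnion.1 (hSX hxS)
  exact disjoint_left.1 (hdisj i) ⟨hxS, hi⟩ (mem_iInter.1 hxC i)

theorem IsStationaryIn.inter_or_inter_of_subset_union (hS : IsStationaryIn S κ.ord)
    {A B : Set Ordinal} (hSAB : S ⊆ A ∪ B) :
    IsStationaryIn (S ∩ A) κ.ord ∨ IsStationaryIn (S ∩ B) κ.ord := by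
  have hbool : Cardinal.lift.{u} #Bool < Cardinal.lift.{0} κ := by
    simpa using (natCast_lt_aleph0 (n := 2)).trans hκ₀
  rw [union_eq_iUnion] at hSAB
  obtain ⟨_ | _, h⟩ := hS.exists_inter_of_subset_iUnion hκ hκ₀ hbool hSAB
  exacts [.inr h, .inl h]

theorem IsStationaryIn.fodor (hS : IsStationaryIn S κ.ord) {f : Ordinal → Ordinal}
    (hf : ∀ α ∈ S, f α < α) : ∃ γ, IsStationaryIn {α ∈ S | f α = γ} κ.ord := by
  by_contra! h
  choose C hC hdisj using fun γ =>
    (not_isStationaryIn_iff ((sep_subset _ _).trans hS.1)).1 (h γ)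
  obtain ⟨α, hαS, -, hαC⟩ := hS.2 _ (IsClubIn.diagInter hκ hκ₀ fun j _ => hC j)
  exact disjoint_left.1 (hdisj (f α)) ⟨hαS, rfl⟩ (hαC (f α) (hf α hαS))

theorem exists_isUnboundedRegressiveOn_of_ord_cof_lt (hS : IsStationaryIn S κ.ord)
    (hcof : ∀ α ∈ S, α.cof.ord < α) :
    ∃ W ⊆ S, ∃ f, IsUnboundedRegressiveOn κ f W := by
  have hlim := isSuccLimit_ord hκ.aleph0_le
  obtain ⟨θ, hW⟩ := hS.fodor hκ hκ₀ hcof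
  set W := {α ∈ S | α.cof.ord = θ}
  obtain ⟨α₀, ⟨hα₀S, hα₀θ⟩, -⟩ := hW.exists_gt hlim hlim.bot_lt
  have hθ : θ < κ.ord := hα₀θ ▸ (hcof α₀ hα₀S).trans (hS.1 hα₀S)
  have hseq : ∀ α ∈ W, ∃ a : Iio θ → Ordinal, (∀ ξ, a ξ < α) ∧ ∀ β < α, ∃ ξ, β ≤ a ξ := by
    rintro α ⟨-, hα⟩
    obtain ⟨f, hf⟩ := exists_isFundamentalSeq hα
    refine ⟨fun ξ => f ξ, fun ξ => (f ξ).2, fun β hβ => ?_⟩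
    obtain ⟨_, ⟨ξ, rfl⟩, hξ⟩ := hf.isCofinal_range ⟨β, hβ⟩
    exact ⟨ξ, hξ⟩
  choose! a ha hacof using hseq
  suffices ∃ ξ, ∀ β < κ.ord, IsStationaryIn {α ∈ W | β ≤ a α ξ} κ.ord from
    let ⟨ξ, hξ⟩ := this
    ⟨W, sep_subset _ _, fun α => a α ξ, fun α hα => ha α hα ξ, hξ⟩
  by_contra! h
  choose β hβ hns using h
  have hι : Cardinal.lift.{u} #(Iio θ) < Cardinal.lift.{u + 1} κ := by
    rwa [Cardinal.mk_Iio_ordinal, Cardinal.lift_lift, Cardinal.lift_lt, ← lt_ord]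
  have hsup : ⨆ ξ, β ξ < κ.ord := lift_iSup_lt_of_lt_cof (by rwa [← lift_cof, hκ.cof_ord]) hβ
  have hcover : W ∩ Ioo (⨆ ξ, β ξ) κ.ord ⊆ ⋃ ξ, {α ∈ W | β ξ ≤ a α ξ} := by
    rintro α ⟨hαW, hα, -⟩
    obtain ⟨ξ, hξ⟩ := hacof α hαW _ hα
    exact mem_iUnion.2 ⟨ξ, hαW, (le_ciSup Ordinal.bddAbove_of_small ξ).trans hξ⟩
  have hWβ := hW.inter_isClubIn hκ hκ₀ (isClubIn_Ioo hlim hsup)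
  obtain ⟨ξ, hξ⟩ := hWβ.exists_inter_of_subset_iUnion hκ hκ₀ hι hcover
  exact hns ξ (hξ.mono inter_subset_right fun α hα => hW.1 hα.1)

theorem isStationaryIn_setOf_exists_isClubIn_disjoint {B : Set Ordinal.{u}}
    (hB : IsStationaryIn B κ.ord) (hBreg : ∀ α ∈ B, ℵ₀ < α.cof ∧ α.cof.ord = α) :
    IsStationaryIn {α ∈ B | ∃ c, IsClubIn c α ∧ Disjoint c B} κ.ord := by
  have hlim := isSuccLimit_ord hκ.aleph0_le
  refine ⟨(sep_subset _ _).trans hB.1, fun C hC => ?_⟩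
  have hA := isClubIn_derivedSet_inter_Iio hκ hκ₀ fun x hx => hC.exists_gt hlim hx
  obtain ⟨hαB, hαC, hακ⟩ := csInf_mem (hB.2 _ hA)
  set α := sInf (B ∩ (derivedSet C ∩ Iio κ.ord))
  refine ⟨α, ⟨hαB, derivedSet C ∩ Iio α, ?_, disjoint_left.2 fun δ ⟨hδC, hδα⟩ hδB => ?_⟩,
    hC.mem_of_accPt hακ hαC⟩
  · obtain ⟨hcof, hα⟩ := hBreg α hαB
    have hαlim : IsSuccLimit α := one_lt_cof_iff.1 (one_lt_aleph0.trans hcof)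
    have := isClubIn_derivedSet_inter_Iio (isRegular_cof hαlim) hcof (C := C) (by
      rw [hα]; exact (SuccOrder.accPt_principal.1 hαC).2)
    rwa [hα] at this
  · exact (csInf_le' (s := B ∩ (derivedSet C ∩ Iio κ.ord))
      ⟨hδB, hδC, mem_Iio.2 (lt_trans hδα hακ)⟩).not_gt hδα

theorem exists_isUnboundedRegressiveOn_of_regular {B : Set Ordinal.{u}}
    (hB : IsStationaryIn B κ.ord) (hBreg : ∀ α ∈ B, ℵ₀ < α.cof ∧ α.cof.ord = α) :
    ∃ W ⊆ B, ∃ f, IsUnboundedRegressiveOn κ f W := by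
  have hlim := isSuccLimit_ord hκ.aleph0_le
  set W := {α ∈ B | ∃ c, IsClubIn c α ∧ Disjoint c B}
  have hW := isStationaryIn_setOf_exists_isClubIn_disjoint hκ hκ₀ hB hBreg
  have hWlim : ∀ α ∈ W, IsSuccLimit α := fun α hα =>
    one_lt_cof_iff.1 (one_lt_aleph0.trans (hBreg α hα.1).1)
  choose! c hc hcB using fun α (hα : α ∈ W) => hα.2
  choose! e he using fun α (hα : α ∈ W) ξ (hξ : ξ < α) => (hc α hα).exists_gt (hWlim α hα) hξ
  suffices ∃ ξ, ∀ β < κ.ord, IsStationaryIn {α ∈ W ∩ Ioi ξ | β ≤ e α ξ} κ.ord from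
    let ⟨ξ, hξ⟩ := this
    ⟨W ∩ Ioi ξ, fun α hα => hα.1.1, fun α => e α ξ, fun α hα => (he α hα.1 ξ hα.2).2.2, hξ⟩
  by_contra! h
  choose! β hβ hns using h
  choose! C hC hdisj using fun ξ => (not_isStationaryIn_iff fun α hα => hW.1 hα.1.1).1 (hns ξ)
  set D := {γ | γ < κ.ord ∧ ∀ ξ < γ, γ ∈ C ξ ∩ Ioo (β ξ) κ.ord}
  have hD : IsClubIn D κ.ord := IsClubIn.diagInter hκ hκ₀ fun ξ _ =>
    (hC ξ).inter hκ hκ₀ (isClubIn_Ioo hlim (hβ ξ))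
  obtain ⟨γ, hγB, hγD, hγκ⟩ := hB.2 _ (isClubIn_derivedSet_inter_Iio hκ hκ₀ fun x hx =>
    hD.exists_gt hlim hx)
  obtain ⟨α, ⟨hαW, hαD⟩, hγα⟩ := (hW.inter_isClubIn hκ hκ₀ hD).exists_gt hlim hγκ
  have he_lt : ∀ ξ < γ, e α ξ < γ := by
    intro ξ hξ
    obtain ⟨δ, hδD, hξδ, hδγ⟩ := (SuccOrder.accPt_principal.1 hγD).2 ξ hξ
    have hξα := hξ.trans hγα
    have : e α ξ < β ξ := not_le.1 fun hle =>
      disjoint_left.1 (hdisj ξ) ⟨⟨hαW, hξα⟩, hle⟩ (hαD.2 ξ hξα).1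
    exact this.trans ((hδD.2 ξ hξδ).2.1.trans hδγ)
  have hγc : γ ∈ c α := (hc α hαW).mem_of_accPt hγα (SuccOrder.accPt_principal.2
    ⟨hγD.not_isMin, fun ξ hξ => ⟨e α ξ, (he α hαW ξ (hξ.trans hγα)).1,
      (he α hαW ξ (hξ.trans hγα)).2.1, he_lt ξ hξ⟩⟩)
  exact disjoint_left.1 (hcB α hαW) hγc hγB

theorem exists_isUnboundedRegressiveOn {E : Set Ordinal.{u}} (hE : IsStationaryIn E κ.ord) :
    ∃ W ⊆ E, ∃ f, IsUnboundedRegressiveOn κ f W := by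
  have hlim := isSuccLimit_ord hκ.aleph0_le
  have hω : ω < κ.ord := lt_ord.2 (by rwa [card_omega0])
  have hsplit : E ∩ Ioo ω κ.ord ⊆
      {α | α.cof.ord < α} ∪ {α | ℵ₀ < α.cof ∧ α.cof.ord = α} := by
    rintro α ⟨-, hωα, -⟩
    rcases (ord_cof_le α).lt_or_eq with h | h
    · exact .inl h
    · refine .inr ⟨?_, h⟩
      rw [← h, lt_ord, card_omega0] at hωα
      exact hωα
  rcases (hE.inter_isClubIn hκ hκ₀ (isClubIn_Ioo hlim hω)).inter_or_inter_of_subset_union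
    hκ hκ₀ hsplit with h | h
  · obtain ⟨W, hW, f, hf⟩ :=
      exists_isUnboundedRegressiveOn_of_ord_cof_lt hκ hκ₀ h fun α hα => hα.2
    exact ⟨W, fun α hα => (hW hα).1.1, f, hf⟩
  · obtain ⟨W, hW, f, hf⟩ := exists_isUnboundedRegressiveOn_of_regular hκ hκ₀ h fun α hα => hα.2
    exact ⟨W, fun α hα => (hW hα).1.1, f, hf⟩

theorem IsUnboundedRegressiveOn.exists_isStationaryIn_fiber
    {f : Ordinal.{u} → Ordinal.{u}} {W : Set Ordinal.{u}} (hf : IsUnboundedRegressiveOn κ f W)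
    {β : Ordinal} (hβ : β < κ.ord) :
    ∃ γ, β ≤ γ ∧ γ < κ.ord ∧ IsStationaryIn {α ∈ W | f α = γ} κ.ord := by
  have hlim := isSuccLimit_ord hκ.aleph0_le
  obtain ⟨γ, hγ⟩ := (hf.2 β hβ).fodor hκ hκ₀ fun α hα => hf.1 α hα.1
  obtain ⟨α, ⟨⟨hαW, hβα⟩, rfl⟩, -⟩ := hγ.exists_gt hlim hlim.bot_lt
  have hW : W ⊆ Iio κ.ord := fun x hx => (hf.2 0 (hβ.trans_le' bot_le)).1 ⟨hx, zero_le⟩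
  exact ⟨f α, hβα, (hf.1 α hαW).trans (hW hαW),
    hγ.mono (fun x hx => ⟨hx.1.1, hx.2⟩) fun x hx => hW hx.1⟩

end Regular

theorem Cardinal.IsRegular.exists_injective_of_forall_exists_ge {κ : Cardinal.{u}}
    (hκ : κ.IsRegular) {G : Set Ordinal.{u}} (hG : ∀ β < κ.ord, ∃ γ ∈ G, β ≤ γ ∧ γ < κ.ord) :
    ∃ (ι : Type u) (g : ι → Ordinal.{u}), #ι = κ ∧ Function.Injective g ∧ ∀ i, g i ∈ G := by
  let s : Set κ.ord.ToType := {i | (ToType.mk.symm i : Ordinal) ∈ G}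
  have hs : IsCofinal s := by
    intro i
    obtain ⟨γ, hγG, hβγ, hγ⟩ := hG _ (mem_Iio.1 (ToType.mk.symm i).2)
    refine ⟨ToType.mk ⟨γ, hγ⟩, by simpa [s] using hγG, ?_⟩
    rw [← ToType.mk.symm.le_iff_le, OrderIso.symm_apply_apply]
    exact hβγ
  refine ⟨s, fun i => ToType.mk.symm i.1, le_antisymm ?_ ?_, fun i j h => ?_, fun i => i.2⟩
  · simpa using mk_set_le s
  · simpa [hκ.cof_ord] using cof_le hs
  · exact Subtype.ext (ToType.mk.symm.injective (Subtype.ext h))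

/-- Solovay's theorem: if `κ` is an uncountable regular cardinal, then every
stationary subset of `κ` can be decomposed as the disjoint union of `κ` many
stationary subsets of `κ`. -/
theorem solovay_decomposition (κ : Cardinal) (hreg : κ.IsRegular) (hunc : Cardinal.aleph0 < κ)
    (E : Set Ordinal) (hE : IsStationaryIn E κ.ord) :
    ∃ (ι : Type) (S : ι → Set Ordinal), Cardinal.mk ι = κ ∧
      (∀ i, IsStationaryIn (S i) κ.ord) ∧
      Pairwise (Function.onFun Disjoint S) ∧ (⋃ i, S i) = E := by
  obtain ⟨W, hWE, f, hf⟩ := exists_isUnboundedRegressiveOn hreg hunc hE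
  obtain ⟨ι, g, hι, hg, hgW⟩ := hreg.exists_injective_of_forall_exists_ge
    (G := {γ | IsStationaryIn {α ∈ W | f α = γ} κ.ord}) fun β hβ =>
      let ⟨γ, hβγ, hγ, hW⟩ := hf.exists_isStationaryIn_fiber hreg hunc hβ
      ⟨γ, hW, hβγ, hγ⟩
  have : Nonempty ι := mk_ne_zero_iff.1 (hι ▸ hreg.pos.ne')
  obtain ⟨S, hTS, hS, hSE⟩ := exists_iUnion_eq_of_pairwise_disjoint
    (T := fun i => {α ∈ W | f α = g i})
    (fun i j hij => disjoint_left.2 fun α hi hj => hij (hg (hi.2.symm.trans hj.2)))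
    fun i => (sep_subset _ _).trans hWE
  exact ⟨ι, S, hι, fun i => (hgW i).mono (hTS i) ((subset_iUnion S i).trans (hSE ▸ hE.1)),
    hS, hSE⟩
end
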